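/- arXiv:2307.08447 — 2 statements merged into one kernel-verified Lean document; each statement's English description precedes it below -/
import Mathlib

section
/- Let G be a perfect graph and let W, W' be distinct stable sets of G. Then conv({ρ(W), ρ(W')}) is an edge of the stable set polytope Stab(G) if and only if the induced subgraph of G on the symmetric difference W △ W' is a connected bipartite graph. -/
open Set

variable {V : Type*} [Fintype V]

/-- A stable (independent) set of a graph. -/
def IsStable (G : SimpleGraph V) (W : Set V) : Prop := ∀ a ∈ W, ∀ b ∈ W, ¬ G.Adj a b

/-- The indicator vector of a subset. -/
noncomputable def rho (W : Set V) : V → ℝ := W.indicator 1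

/-- The stable set polytope of a graph. -/
noncomputable def stabPolytope (G : SimpleGraph V) : Set (V → ℝ) :=
  convexHull ℝ {x | ∃ W : Set V, IsStable G W ∧ x = rho W}

/-- `conv {v, w}` is an edge (1-dimensional face) of the polytope `P`. -/
def IsEdgeOf (P : Set (V → ℝ)) (v w : V → ℝ) : Prop :=
  v ≠ w ∧ IsExtreme ℝ P (segment ℝ v w)

/-- A graph is perfect if every induced subgraph has chromatic number equal to clique number. -/
def IsPerfect (G : SimpleGraph V) : Prop :=
  ∀ s : Set V, (G.induce s).chromaticNumber = ((G.induce s).cliqueNum : ℕ∞)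

/-- The induced subgraph on `S` is a connected bipartite graph. -/
def ConnBipartiteIn (G : SimpleGraph V) (S : Set V) : Prop :=
  (G.induce S).Connected ∧ (G.induce S).Colorable 2

/-- The symmetric difference of two sets. -/
def sd (W W' : Set V) : Set V := (W \ W') ∪ (W' \ W)

/-!
Both directions go through the symmetric difference `S = W ∆ W'`, on which `G` is bipartite
with sides `W \ W'` and `W' \ W`.

If `G[S]` splits into two nonempty parts `D` and `S \ D` with no edges between them, then
`W ∆ D` and `W' ∆ D` are stable sets different from `W` and `W'` whose indicator vectors have
the same midpoint as `ρ(W)` and `ρ(W')`, so the segment is not a face.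

Conversely, if `G[S]` is connected, the linear functional
`x ↦ ∑_{W ∩ W'} x_v - ∑_{V \ (W ∪ W')} x_v + ∑_{ab ∈ E(G[S])} (x_a + x_b)`
is maximized over the stable sets exactly at `W` and `W'`: a maximizer contains `W ∩ W'`, avoids
`V \ (W ∪ W')` and contains exactly one endpoint of each edge of the connected bipartite graph
`G[S]`, hence one of its sides. The segment is therefore an exposed face of `Stab(G)`.
-/

open scoped symmDiff

section Convexity

variable {E : Type*} [AddCommGroup E] [Module ℝ E]

theorem convexHull_inter_level_subset {s : Set E} {f : E →ₗ[ℝ] ℝ} {M : ℝ}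
    (hf : ∀ y ∈ s, f y ≤ M) :
    convexHull ℝ s ∩ {x | f x = M} ⊆ convexHull ℝ (s ∩ {x | f x = M}) := by
  rintro x ⟨hx, hfx⟩
  set T := s ∩ {x | f x = M}
  set R := s ∩ {x | f x < M}
  have hsTR : s = T ∪ R := by
    ext y
    simp only [T, R, mem_union, mem_inter_iff, mem_ofPred_eq, ← and_or_left]
    exact ⟨fun hy => ⟨hy, (hf y hy).eq_or_lt⟩, And.left⟩
  have hR : convexHull ℝ R ⊆ {x | f x < M} :=
    convexHull_min inter_subset_right (convex_halfSpace_lt f.isLinear M)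
  have hT : convexHull ℝ T ⊆ {x | f x = M} :=
    convexHull_min inter_subset_right (convex_hyperplane f.isLinear M)
  rcases T.eq_empty_or_nonempty with hT₀ | hT₀
  · rw [hsTR, hT₀, empty_union] at hx
    exact absurd hfx (hR hx).ne
  rcases R.eq_empty_or_nonempty with hR₀ | hR₀
  · rwa [hsTR, hR₀, union_empty] at hx
  rw [hsTR, convexHull_union hT₀ hR₀, mem_convexJoin] at hx
  obtain ⟨y, hy, z, hz, a, b, ha, hb, hab, rfl⟩ := hx
  have hfy : f y = M := hT hy
  have hfz : f z < M := hR hz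
  have hb₀ : b = 0 := by
    have hfx : a * M + b * f z = M := by simpa [hfy] using hfx
    have : b * (M - f z) = 0 := by linear_combination M * hab - hfx
    exact (mul_eq_zero.1 this).resolve_right (sub_ne_zero.2 hfz.ne')
  rwa [hb₀, zero_smul, add_zero, show a = 1 by linarith, one_smul]

theorem isExtreme_convexHull_segment_of_max {s : Set E} {f : E →ₗ[ℝ] ℝ} {v w : E}
    (hv : v ∈ s) (hw : w ∈ s) (hf : ∀ y ∈ s, f y ≤ f v) (hfw : f w = f v)
    (hmax : ∀ y ∈ s, f y = f v → y = v ∨ y = w) :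
    IsExtreme ℝ (convexHull ℝ s) (segment ℝ v w) := by
  refine ⟨segment_subset_convexHull hv hw, fun x₁ hx₁ x₂ hx₂ x hx hx₁₂ => ?_⟩
  have hle : convexHull ℝ s ⊆ {x | f x ≤ f v} :=
    convexHull_min hf (convex_halfSpace_le f.isLinear _)
  have hfx : f x = f v := (convex_hyperplane f.isLinear (f v)).segment_subset rfl hfw hx
  have h₁ : f x₁ ≤ f v := hle hx₁
  have h₂ : f x₂ ≤ f v := hle hx₂
  obtain ⟨a, b, ha, hb, hab, rfl⟩ := hx₁₂
  simp only [map_add, map_smul, smul_eq_mul] at hfx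
  have hsub : convexHull ℝ s ∩ {x | f x = f v} ⊆ segment ℝ v w := by
    refine (convexHull_inter_level_subset hf).trans ?_
    rw [← convexHull_pair]
    exact convexHull_mono fun y hy => hmax y hy.1 hy.2
  have hsum : a * (f v - f x₁) + b * (f v - f x₂) = 0 := by
    linear_combination f v * hab - hfx
  have hx₁v : a * (f v - f x₁) = 0 := ((add_eq_zero_iff_of_nonneg
    (mul_nonneg ha.le (sub_nonneg.2 h₁)) (mul_nonneg hb.le (sub_nonneg.2 h₂))).1 hsum).1
  exact hsub ⟨hx₁, (sub_eq_zero.1 ((mul_eq_zero.1 hx₁v).resolve_left ha.ne')).symm⟩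

end Convexity

variable {α : Type*}

section Graph

def IsAdjClosedIn (G : SimpleGraph α) (S D : Set α) : Prop :=
  ∀ a ∈ D, ∀ b ∈ S, G.Adj a b → b ∈ D

variable {G : SimpleGraph α} {S : Set α}

theorem preconnected_induce_iff :
    (G.induce S).Preconnected ↔ ∀ D ⊆ S, IsAdjClosedIn G S D → D.Nonempty → D = S := by
  constructor
  · rintro hS D hDS hD ⟨u, hu⟩
    refine hDS.antisymm fun v hv => by_contra fun hvD => ?_
    obtain ⟨p⟩ := hS ⟨u, hDS hu⟩ ⟨v, hv⟩
    obtain ⟨d, -, hd₁, hd₂⟩ := p.exists_boundary_dart (Subtype.val ⁻¹' D) hu hvD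
    exact hd₂ (hD _ hd₁ _ d.snd.2 d.adj)
  · intro h u v
    have hD := h (Subtype.val '' {w | (G.induce S).Reachable u w})
      (image_subset_iff.2 fun w _ => w.2) ?_ ⟨u, u, .rfl, rfl⟩
    · obtain ⟨w, hw, hwv⟩ := hD.superset v.2
      exact Subtype.ext hwv ▸ hw
    · rintro _ ⟨a, ha, rfl⟩ b hb hab
      exact ⟨⟨b, hb⟩, ha.trans (SimpleGraph.Adj.reachable hab), rfl⟩

end Graph

section StableSets

variable {G : SimpleGraph α} {W W' D U : Set α}

theorem rho_injective : Function.Injective (rho : Set α → α → ℝ) :=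
  fun _ _ h => indicator_one_inj ℝ h

theorem rho_mem_stabPolytope (hU : IsStable G U) : rho U ∈ stabPolytope G :=
  subset_convexHull ℝ _ ⟨U, hU, rfl⟩

theorem rho_add_rho_le_one (hU : IsStable G U) {a b : α} (hab : G.Adj a b) :
    rho U a + rho U b ≤ 1 := by
  by_cases ha : a ∈ U <;> by_cases hb : b ∈ U
  · exact absurd hab (hU a ha b hb)
  all_goals simp [rho, ha, hb]

theorem eq_or_eq_of_rho_mem_segment (h : rho U ∈ segment ℝ (rho W) (rho W')) :
    U = W ∨ U = W' := by
  obtain ⟨a, b, ha, hb, hab, hU⟩ := h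
  rcases eq_or_ne W W' with rfl | hne
  · left
    apply rho_injective
    rw [← hU, ← add_smul, hab, one_smul]
  obtain ⟨v, hv⟩ := symmDiff_nonempty.2 hne
  have hUv := congrFun hU v
  have hab' : a = 1 ∧ b = 0 ∨ a = 0 ∧ b = 1 := by
    rcases mem_symmDiff.1 hv with ⟨h, h'⟩ | ⟨h, h'⟩ <;> by_cases hvU : v ∈ U <;>
      simp [rho, h, h', hvU] at hUv <;> first
        | exact Or.inl ⟨by linarith, by linarith⟩
        | exact Or.inr ⟨by linarith, by linarith⟩
  rcases hab' with ⟨rfl, rfl⟩ | ⟨rfl, rfl⟩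
  · exact Or.inl (rho_injective (by simpa using hU.symm))
  · exact Or.inr (rho_injective (by simpa using hU.symm))

theorem IsStable.symmDiff_of_isAdjClosedIn (hW : IsStable G W) (hW' : IsStable G W')
    (hDS : D ⊆ W ∆ W') (hD : IsAdjClosedIn G (W ∆ W') D) : IsStable G (W ∆ D) := by
  have hDW : D \ W ⊆ W' := fun v hv =>
    ((mem_symmDiff.1 (hDS hv.1)).resolve_left fun h => hv.2 h.1).1
  have mixed : ∀ a ∈ W \ D, ∀ b ∈ D \ W, ¬G.Adj a b := by
    rintro a ⟨haW, haD⟩ b hb hab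
    by_cases haW' : a ∈ W'
    · exact hW' a haW' b (hDW hb) hab
    · exact haD (hD b hb.1 a (mem_symmDiff.2 (Or.inl ⟨haW, haW'⟩)) hab.symm)
  rintro a (ha | ha) b (hb | hb) hab
  · exact hW a ha.1 b hb.1 hab
  · exact mixed a ha b hb hab
  · exact mixed b hb a ha hab.symm
  · exact hW' a (hDW ha) b (hDW hb) hab

theorem rho_symmDiff_add_rho_symmDiff (hDS : D ⊆ W ∆ W') :
    rho (W ∆ D) + rho (W' ∆ D) = rho W + rho W' := by
  funext v
  have := @hDS v
  by_cases hD : v ∈ D <;> by_cases hW : v ∈ W <;> by_cases hW' : v ∈ W' <;>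
    simp_all [rho, mem_symmDiff]

theorem eq_empty_or_eq_of_isExtreme_segment (hW : IsStable G W) (hW' : IsStable G W')
    (hext : IsExtreme ℝ (stabPolytope G) (segment ℝ (rho W) (rho W'))) (hDS : D ⊆ W ∆ W')
    (hD : IsAdjClosedIn G (W ∆ W') D) : D = ∅ ∨ D = W ∆ W' := by
  have hU := hW.symmDiff_of_isAdjClosedIn hW' hDS hD
  have hU' := hW'.symmDiff_of_isAdjClosedIn hW (D := D) (by rwa [symmDiff_comm])
    (by rwa [symmDiff_comm])
  have hm : (1 / 2 : ℝ) • (rho W + rho W') ∈ segment ℝ (rho W) (rho W') :=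
    ⟨1 / 2, 1 / 2, by norm_num, by norm_num, by norm_num, (smul_add _ _ _).symm⟩
  have hm' :
      (1 / 2 : ℝ) • (rho W + rho W') ∈ openSegment ℝ (rho (W ∆ D)) (rho (W' ∆ D)) :=
    ⟨1 / 2, 1 / 2, by norm_num, by norm_num, by norm_num,
      by rw [← smul_add, rho_symmDiff_add_rho_symmDiff hDS]⟩
  rcases eq_or_eq_of_rho_mem_segment (hext.left_mem_of_mem_openSegment
    (rho_mem_stabPolytope hU) (rho_mem_stabPolytope hU') hm hm') with h | h
  · exact Or.inl (symmDiff_eq_left.1 h)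
  · exact Or.inr (by rw [← h, symmDiff_symmDiff_cancel_left])

theorem colorable_two_induce_symmDiff (hW : IsStable G W) (hW' : IsStable G W') :
    (G.induce (W ∆ W')).Colorable 2 := by
  refine (SimpleGraph.Coloring.mk (fun v : ↥(W ∆ W') => (v : α) ∈ W) ?_).colorable.mono
    (by simp)
  intro a b hab heq
  rcases a.2 with ⟨haW, -⟩ | ⟨haW', haW⟩
  · exact hW a haW b ((iff_of_eq heq).1 haW) hab
  · have hbW : (b : α) ∉ W := fun h => haW ((iff_of_eq heq).2 h)
    exact hW' a haW' b ((mem_symmDiff.1 b.2).resolve_left fun h => hbW h.1).1 hab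

theorem eq_of_forall_mem_symmDiff (hinter : W ∩ W' ⊆ U) (hunion : U ⊆ W ∪ W')
    (h : ∀ v ∈ W ∆ W', v ∈ U ↔ v ∈ W) : U = W := by
  ext v
  by_cases hv : v ∈ W ∆ W'
  · exact h v hv
  · have := @hinter v
    have := @hunion v
    simp only [mem_symmDiff, mem_inter_iff, mem_union] at *
    tauto

theorem eq_or_eq_of_forall_adj_mem_iff (hW : IsStable G W) (hW' : IsStable G W')
    (hS : (G.induce (W ∆ W')).Preconnected) (hinter : W ∩ W' ⊆ U) (hunion : U ⊆ W ∪ W')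
    (halt : ∀ a ∈ W \ W', ∀ b ∈ W' \ W, G.Adj a b → (a ∈ U ↔ b ∉ U)) :
    U = W ∨ U = W' := by
  set D := {v ∈ W ∆ W' | v ∈ U ↔ v ∈ W}
  have hD : IsAdjClosedIn G (W ∆ W') D := by
    rintro a ⟨ha, haU⟩ b hb hab
    refine ⟨hb, ?_⟩
    rcases mem_symmDiff.1 ha with ⟨haW, haW'⟩ | ⟨haW', haW⟩ <;>
      rcases mem_symmDiff.1 hb with ⟨hbW, hbW'⟩ | ⟨hbW', hbW⟩
    · exact absurd hab (hW a haW b hbW)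
    · have := halt a ⟨haW, haW'⟩ b ⟨hbW', hbW⟩ hab
      tauto
    · have := halt b ⟨hbW, hbW'⟩ a ⟨haW', haW⟩ hab.symm
      tauto
    · exact absurd hab (hW' a haW' b hbW')
  rcases D.eq_empty_or_nonempty with hD₀ | hD₀
  · refine Or.inr (eq_of_forall_mem_symmDiff (by rwa [inter_comm]) (by rwa [union_comm])
      fun v hv => ?_)
    rw [symmDiff_comm] at hv
    have hvD : v ∉ D := hD₀ ▸ notMem_empty v
    rcases mem_symmDiff.1 hv with ⟨hvW, hvW'⟩ | ⟨hvW', hvW⟩ <;> simp_all [D]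
  · have hDS := preconnected_induce_iff.1 hS D (sep_subset _ _) hD hD₀
    exact Or.inl (eq_of_forall_mem_symmDiff hinter hunion fun v hv => (hDS.superset hv).2)

end StableSets

section Functional

variable (G : SimpleGraph α) (W W' : Set α)

def crossEdges : Set (α × α) := {p | p.1 ∈ W \ W' ∧ p.2 ∈ W' \ W ∧ G.Adj p.1 p.2}

noncomputable def vertexWeight (v : α) : ℝ :=
  (W ∩ W').indicator 1 v - (W ∪ W')ᶜ.indicator 1 v

noncomputable def edgeFunctional [Fintype α] : (α → ℝ) →ₗ[ℝ] ℝ where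
  toFun x := ∑ v, vertexWeight W W' v * x v +
    ∑ p, (crossEdges G W W').indicator 1 p * (x p.1 + x p.2)
  map_add' x y := by
    simp only [Pi.add_apply, mul_add, Finset.sum_add_distrib]
    ring
  map_smul' c x := by
    simp only [Pi.smul_apply, smul_eq_mul, RingHom.id_apply, mul_add, Finset.mul_sum]
    congr 1 <;> refine Finset.sum_congr rfl fun _ _ => by ring

variable {G W W'} {U : Set α}

theorem edgeFunctional_apply [Fintype α] (x : α → ℝ) :
    edgeFunctional G W W' x = ∑ v, vertexWeight W W' v * x v +
      ∑ p, (crossEdges G W W').indicator 1 p * (x p.1 + x p.2) := rfl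

theorem vertexWeight_mul_rho_le (v : α) :
    vertexWeight W W' v * rho U v ≤ vertexWeight W W' v * rho W v := by
  by_cases hU : v ∈ U <;> by_cases hW : v ∈ W <;> by_cases hW' : v ∈ W' <;>
    simp [vertexWeight, rho, hU, hW, hW']

theorem vertexWeight_mul_rho_eq_iff {v : α} :
    vertexWeight W W' v * rho U v = vertexWeight W W' v * rho W v ↔
      (v ∈ W ∩ W' → v ∈ U) ∧ (v ∈ U → v ∈ W ∪ W') := by
  by_cases hU : v ∈ U <;> by_cases hW : v ∈ W <;> by_cases hW' : v ∈ W' <;>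
    simp [vertexWeight, rho, hU, hW, hW']

theorem vertexWeight_mul_rho_right (v : α) :
    vertexWeight W W' v * rho W' v = vertexWeight W W' v * rho W v := by
  by_cases hW : v ∈ W <;> by_cases hW' : v ∈ W' <;> simp [vertexWeight, rho, hW, hW']

theorem crossEdges_mul_rho_le (hU : IsStable G U) (p : α × α) :
    (crossEdges G W W').indicator 1 p * (rho U p.1 + rho U p.2) ≤
      (crossEdges G W W').indicator 1 p * (rho W p.1 + rho W p.2) := by
  by_cases hp : p ∈ crossEdges G W W'
  · simpa [hp, rho, hp.1.1, hp.2.1.2] using rho_add_rho_le_one hU hp.2.2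
  · simp [hp]

theorem crossEdges_mul_rho_eq_iff {p : α × α} :
    (crossEdges G W W').indicator 1 p * (rho U p.1 + rho U p.2) =
        (crossEdges G W W').indicator 1 p * (rho W p.1 + rho W p.2) ↔
      (p ∈ crossEdges G W W' → (p.1 ∈ U ↔ p.2 ∉ U)) := by
  by_cases hp : p ∈ crossEdges G W W'
  · by_cases h₁ : p.1 ∈ U <;> by_cases h₂ : p.2 ∈ U <;>
      simp [hp, rho, hp.1.1, hp.2.1.2, h₁, h₂]
  · simp [hp]

theorem crossEdges_mul_rho_right (p : α × α) :
    (crossEdges G W W').indicator 1 p * (rho W' p.1 + rho W' p.2) =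
      (crossEdges G W W').indicator 1 p * (rho W p.1 + rho W p.2) := by
  by_cases hp : p ∈ crossEdges G W W'
  · simp [hp, rho, hp.1.1, hp.1.2, hp.2.1.1, hp.2.1.2, add_comm]
  · simp [hp]

variable [Fintype α]

theorem edgeFunctional_rho_le (hU : IsStable G U) :
    edgeFunctional G W W' (rho U) ≤ edgeFunctional G W W' (rho W) :=
  add_le_add (Finset.sum_le_sum fun v _ => vertexWeight_mul_rho_le v)
    (Finset.sum_le_sum fun p _ => crossEdges_mul_rho_le hU p)

theorem edgeFunctional_rho_right :
    edgeFunctional G W W' (rho W') = edgeFunctional G W W' (rho W) := by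
  simp only [edgeFunctional_apply, vertexWeight_mul_rho_right, crossEdges_mul_rho_right]

theorem eq_or_eq_of_edgeFunctional_rho_eq (hW : IsStable G W) (hW' : IsStable G W')
    (hU : IsStable G U) (hS : (G.induce (W ∆ W')).Preconnected)
    (h : edgeFunctional G W W' (rho U) = edgeFunctional G W W' (rho W)) : U = W ∨ U = W' := by
  rw [edgeFunctional_apply, edgeFunctional_apply,
    add_eq_add_iff_eq_and_eq (Finset.sum_le_sum fun v _ => vertexWeight_mul_rho_le v)
      (Finset.sum_le_sum fun p _ => crossEdges_mul_rho_le hU p),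
    Finset.sum_eq_sum_iff_of_le fun v _ => vertexWeight_mul_rho_le v,
    Finset.sum_eq_sum_iff_of_le fun p _ => crossEdges_mul_rho_le hU p] at h
  obtain ⟨hv, hp⟩ := h
  exact eq_or_eq_of_forall_adj_mem_iff hW hW' hS
    (fun v => (vertexWeight_mul_rho_eq_iff.1 (hv v (Finset.mem_univ v))).1)
    (fun v => (vertexWeight_mul_rho_eq_iff.1 (hv v (Finset.mem_univ v))).2)
    fun a ha b hb hab =>
      crossEdges_mul_rho_eq_iff.1 (hp (a, b) (Finset.mem_univ _)) ⟨ha, hb, hab⟩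

end Functional

theorem stable_edge_iff_general (G : SimpleGraph V) (W W' : Set V)
    (hW : IsStable G W) (hW' : IsStable G W') :
    IsEdgeOf (stabPolytope G) (rho W) (rho W') ↔ ConnBipartiteIn G (sd W W') := by
  change _ ↔ (G.induce (W ∆ W')).Connected ∧ _
  constructor
  · rintro ⟨hne, hext⟩
    have hS : (W ∆ W').Nonempty := symmDiff_nonempty.2 (rho_injective.ne_iff.1 hne)
    refine ⟨(SimpleGraph.connected_iff _).2
      ⟨preconnected_induce_iff.2 fun D hDS hD hD₀ => ?_, hS.to_subtype⟩,
      colorable_two_induce_symmDiff hW hW'⟩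
    exact (eq_empty_or_eq_of_isExtreme_segment hW hW' hext hDS hD).resolve_left hD₀.ne_empty
  · rintro ⟨hS, -⟩
    refine ⟨rho_injective.ne (symmDiff_nonempty.1 (nonempty_coe_sort.1 hS.nonempty)),
      isExtreme_convexHull_segment_of_max (f := edgeFunctional G W W') ⟨W, hW, rfl⟩
        ⟨W', hW', rfl⟩ ?_ edgeFunctional_rho_right ?_⟩
    · rintro _ ⟨U, hU, rfl⟩
      exact edgeFunctional_rho_le hU
    · rintro _ ⟨U, hU, rfl⟩ h
      exact (eq_or_eq_of_edgeFunctional_rho_eq hW hW' hU hS.preconnected h).imp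
        (congrArg rho) (congrArg rho)

theorem stable_edge_iff (G : SimpleGraph V) (hG : IsPerfect G) (W W' : Set V)
    (hW : IsStable G W) (hW' : IsStable G W') (hne : W ≠ W') :
    IsEdgeOf (stabPolytope G) (rho W) (rho W') ↔ ConnBipartiteIn G (sd W W') :=
  stable_edge_iff_general G W W' hW hW'
end

section
/- Let P be a finite poset and Com(P) its comparability graph. Then the stable set polytope Stab(Com(P)) equals the chain polytope C(P) of P, i.e., the convex hull of indicator vectors of antichains of P equals {x ∈ ℝ^d : x_i ≥ 0 for all i, and Σ_{p ∈ C} x_p ≤ 1 for every maximal chain C of P}. -/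
open Set

variable {V : Type*} [Fintype V]

/-- The comparability graph of a poset. -/
def comparabilityGraph (α : Type*) [PartialOrder α] : SimpleGraph α where
  Adj a b := a < b ∨ b < a
  symm := ⟨by intro a b h; tauto⟩
  loopless := ⟨by intro a h; rcases h with h | h <;> exact lt_irrefl _ h⟩

/-!
Antichains of `P` are exactly the stable sets of `Com(P)`, and a chain meets an antichain at most
once, so every antichain indicator lies in the chain polytope. Conversely, let `x ≥ 0` have all
chain sums at most `c`, let `A` be the set of minimal elements of the support of `x` (an
antichain) and `l` the least value of `x` on `A`. Every chain missing `A` can be extended below by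
an element of `A`, so `x - l • 𝟙_A` still has nonnegative values and chain sums at most `c - l`,
and its support is strictly smaller. By induction on the support,
`x = l • 𝟙_A + (x - l • 𝟙_A) ∈ l • Stab + (c - l) • Stab = c • Stab`; working in the cone
`c • Stab` avoids renormalising by `1 - l`.
-/

section ChainPolytope

open Function Finset
open scoped Pointwise

lemma rho_nonneg {β : Type*} (W : Set β) : 0 ≤ rho W :=
  Set.indicator_nonneg fun _ _ => zero_le_one

lemma sum_rho {β : Type*} (W : Set β) [DecidablePred (· ∈ W)] (s : Finset β) :
    ∑ a ∈ s, rho W a = #{a ∈ s | a ∈ W} := by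
  simp only [rho, Set.indicator_apply, Pi.one_apply, sum_boole]

variable {α : Type*} [PartialOrder α]

def ChainSumsLE (x : α → ℝ) (c : ℝ) : Prop :=
  ∀ s : Finset α, IsChain (· ≤ ·) (s : Set α) → ∑ a ∈ s, x a ≤ c

variable (α) in
def chainPolytope : Set (α → ℝ) := {x | 0 ≤ x ∧ ChainSumsLE x 1}

def minSupport (x : α → ℝ) : Set α := {a | Minimal (· ∈ support x) a}

lemma isAntichain_minSupport (x : α → ℝ) : IsAntichain (· ≤ ·) (minSupport x) :=
  setOfPred_minimal_antichain _

lemma ChainSumsLE.apply_le {x : α → ℝ} {c : ℝ} (h : ChainSumsLE x c) (a : α) : x a ≤ c := by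
  simpa using h {a} (by simp)

lemma convex_chainPolytope : Convex ℝ (chainPolytope α) := by
  have hsum (s : Finset α) : IsLinearMap ℝ fun x : α → ℝ => ∑ a ∈ s, x a :=
    ⟨fun x y => sum_add_distrib, fun r x => (mul_sum s x r).symm⟩
  have hchain : Convex ℝ {x : α → ℝ | ChainSumsLE x 1} := by
    simp only [ChainSumsLE, Set.ofPred_forall]
    exact convex_iInter fun s => convex_iInter fun _ => convex_halfSpace_le (hsum s) 1
  exact (convex_Ici 0).inter hchain

lemma isStable_comparabilityGraph_iff {W : Set α} :
    IsStable (comparabilityGraph α) W ↔ IsAntichain (· ≤ ·) W := by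
  constructor
  · intro h a ha b hb hab hle
    exact h a ha b hb (Or.inl (hle.lt_of_ne hab))
  · rintro h a ha b hb (hlt | hlt)
    exacts [h ha hb hlt.ne hlt.le, h hb ha hlt.ne hlt.le]

lemma IsAntichain.chainSumsLE_rho {W : Set α} (hW : IsAntichain (· ≤ ·) W) :
    ChainSumsLE (rho W) 1 := by
  classical
  intro s hs
  rw [sum_rho, Nat.cast_le_one, card_le_one]
  intro a ha b hb
  simp only [mem_filter] at ha hb
  by_contra hab
  rcases hs ha.1 hb.1 hab with h | h
  exacts [hab (hW.eq ha.2 hb.2 h), hab (hW.eq hb.2 ha.2 h).symm]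

lemma IsAntichain.rho_mem_stabPolytope {W : Set α} (hW : IsAntichain (· ≤ ·) W) :
    rho W ∈ stabPolytope (comparabilityGraph α) :=
  subset_convexHull ℝ _ ⟨W, isStable_comparabilityGraph_iff.2 hW, rfl⟩

lemma stabPolytope_subset_chainPolytope :
    stabPolytope (comparabilityGraph α) ⊆ chainPolytope α := by
  refine convexHull_min ?_ convex_chainPolytope
  rintro _ ⟨W, hW, rfl⟩
  exact ⟨rho_nonneg W, (isStable_comparabilityGraph_iff.1 hW).chainSumsLE_rho⟩

lemma setOf_isMaxChain_sum_le_eq_chainPolytope [Fintype α] :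
    {x : α → ℝ | (∀ a, 0 ≤ x a) ∧
      ∀ C : Set α, IsMaxChain (· ≤ ·) C → ∑ a ∈ C.toFinite.toFinset, x a ≤ 1} =
      chainPolytope α := by
  ext x
  refine and_congr_right fun hx => ⟨fun h s hs => ?_, fun h C hC => h _ (by simpa using hC.1)⟩
  obtain ⟨C, hC, hsC⟩ := hs.exists_maxChain
  calc ∑ a ∈ s, x a ≤ ∑ a ∈ C.toFinite.toFinset, x a :=
        sum_le_sum_of_subset_of_nonneg (fun a ha => by simpa using hsC ha) fun a _ _ => hx a
    _ ≤ 1 := h C hC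

section Peeling

variable {x : α → ℝ} {c : ℝ} {a₀ : α}

lemma minSupport_nonempty [Finite α] (hx : x ≠ 0) : (minSupport x).Nonempty := by
  obtain ⟨m, hm⟩ := support_nonempty_iff.2 hx
  obtain ⟨a, -, ha⟩ := (Set.toFinite _).exists_le_minimal hm
  exact ⟨a, ha⟩

lemma ChainSumsLE.sum_le_sub_of_disjoint_minSupport [Finite α] (h : ChainSumsLE x c)
    (hmin : ∀ a ∈ minSupport x, x a₀ ≤ x a) {s : Finset α} (hs : IsChain (· ≤ ·) (s : Set α))
    (hsA : ∀ a ∈ s, a ∉ minSupport x) : ∑ a ∈ s, x a ≤ c - x a₀ := by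
  classical
  rw [← sum_filter_ne_zero]
  set t := {a ∈ s | x a ≠ 0}
  rcases t.eq_empty_or_nonempty with ht | ht
  · rw [ht, sum_empty]
    linarith [h.apply_le a₀]
  obtain ⟨m, hm⟩ := exists_minimal ht
  obtain ⟨hms, hmx⟩ := mem_filter.1 hm.prop
  have hm_le (b : α) (hb : b ∈ t) : m ≤ b :=
    (hs.total (mem_filter.1 hb).1 hms).elim (hm.2 hb) id
  obtain ⟨a, ham, haA⟩ := (Set.toFinite (support x)).exists_le_minimal hmx
  have hlt : a < m := ham.lt_of_ne fun e => hsA m hms (e ▸ haA)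
  have hat : a ∉ t := fun hat => hsA a (mem_filter.1 hat).1 haA
  have hchain : IsChain (· ≤ ·) ((insert a t : Finset α) : Set α) := by
    rw [coe_insert]
    exact (hs.mono (filter_subset _ _)).insert fun b hb _ => Or.inl (hlt.le.trans (hm_le b hb))
  have hsum_le := h _ hchain
  rw [sum_insert hat] at hsum_le
  linarith [hmin a haA]

lemma ChainSumsLE.sub_smul_rho_minSupport [Finite α] (hx : 0 ≤ x) (h : ChainSumsLE x c)
    (hmin : ∀ a ∈ minSupport x, x a₀ ≤ x a) :
    ChainSumsLE (x - x a₀ • rho (minSupport x)) (c - x a₀) := by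
  classical
  intro s hs
  have hsum : ∑ a ∈ s, (x - x a₀ • rho (minSupport x)) a =
      ∑ a ∈ s, x a - x a₀ * #{a ∈ s | a ∈ minSupport x} := by
    simp only [Pi.sub_apply, Pi.smul_apply, smul_eq_mul, sum_sub_distrib, ← mul_sum, sum_rho]
  rw [hsum]
  by_cases hsA : ∃ a ∈ s, a ∈ minSupport x
  · have hcard : (1 : ℝ) ≤ #{a ∈ s | a ∈ minSupport x} := by
      exact_mod_cast card_pos.2 (by simpa [Finset.Nonempty] using hsA)
    nlinarith [h s hs, mul_le_mul_of_nonneg_left hcard (hx a₀)]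
  · push Not at hsA
    rw [filter_false_of_mem hsA, Finset.card_empty, Nat.cast_zero, mul_zero, sub_zero]
    exact h.sum_le_sub_of_disjoint_minSupport hmin hs hsA

lemma sub_smul_rho_minSupport_nonneg (hx : 0 ≤ x) (hmin : ∀ a ∈ minSupport x, x a₀ ≤ x a) :
    0 ≤ x - x a₀ • rho (minSupport x) := by
  intro b
  by_cases hb : b ∈ minSupport x
  · simpa [rho, hb] using hmin b hb
  · simpa [rho, hb] using hx b

lemma support_sub_smul_rho_minSupport_ssubset (ha₀ : a₀ ∈ minSupport x) :
    support (x - x a₀ • rho (minSupport x)) ⊂ support x := by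
  have hA : minSupport x ⊆ support x := fun a ha => ha.prop
  refine (Set.ssubset_iff_of_subset fun b hb => ?_).2 ⟨a₀, hA ha₀, ?_⟩
  · by_contra hbx
    apply hb
    simp [rho, Set.indicator_of_notMem (fun h => hbx (hA h)), notMem_support.1 hbx]
  · simp [rho, Set.indicator_of_mem ha₀]

theorem mem_smul_stabPolytope_of_chainSumsLE [Finite α] {x : α → ℝ} {c : ℝ} (hx : 0 ≤ x)
    (h : ChainSumsLE x c) : x ∈ c • stabPolytope (comparabilityGraph α) := by
  have hK : Convex ℝ (stabPolytope (comparabilityGraph α)) := convex_convexHull ℝ _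
  obtain rfl | hne := eq_or_ne x 0
  · refine Set.zero_mem_smul_set ?_
    simpa only [rho, Set.indicator_empty, ← Pi.zero_def] using
      (IsAntichain.empty : IsAntichain (· ≤ ·) (∅ : Set α)).rho_mem_stabPolytope
  obtain ⟨a₀, ha₀, hmin⟩ := Set.exists_min_image _ x (Set.toFinite _) (minSupport_nonempty hne)
  have hsupport := support_sub_smul_rho_minSupport_ssubset ha₀
  have hrest : x - x a₀ • rho (minSupport x) ∈ (c - x a₀) • stabPolytope (comparabilityGraph α) :=
    mem_smul_stabPolytope_of_chainSumsLE (sub_smul_rho_minSupport_nonneg hx hmin)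
      (h.sub_smul_rho_minSupport hx hmin)
  have hsplit := Set.add_mem_add
    (Set.smul_mem_smul_set (a := x a₀) (isAntichain_minSupport x).rho_mem_stabPolytope) hrest
  rwa [add_sub_cancel, ← hK.add_smul (hx a₀) (sub_nonneg.2 (h.apply_le a₀)),
    add_sub_cancel] at hsplit
termination_by (support x).ncard
decreasing_by exact Set.ncard_lt_ncard hsupport

end Peeling

lemma chainPolytope_subset_stabPolytope [Finite α] :
    chainPolytope α ⊆ stabPolytope (comparabilityGraph α) := fun _ ⟨hx, h⟩ => by
  simpa using mem_smul_stabPolytope_of_chainSumsLE hx h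

end ChainPolytope

theorem stab_comparability_eq_chainPolytope (α : Type*) [Fintype α] [PartialOrder α] :
    stabPolytope (comparabilityGraph α) =
      {x : α → ℝ | (∀ a, 0 ≤ x a) ∧
        ∀ C : Set α, IsMaxChain (· ≤ ·) C → ∑ a ∈ C.toFinite.toFinset, x a ≤ 1} := by
  rw [setOf_isMaxChain_sum_le_eq_chainPolytope]
  exact stabPolytope_subset_chainPolytope.antisymm chainPolytope_subset_stabPolytope
end
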